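/- arXiv:1407.5502 — 2 statements merged into one kernel-verified Lean document; each statement's English description precedes it below -/
import Mathlib

section
/- There exists a constant M₀ > 0, depending only on θ₋ and θ₊ (in particular independent of α and δ₀), such that for every α > 0, every δ₀ ∈ (0,1) and every x ≥ 0 one has |Θ₀'(x)| ≤ M₀ α δ₀ and |Θ₀''(x)| ≤ M₀ α² δ₀. -/
/-!
Write `Θ₀(y) = θ₊ - (θ₊ - θ₋) φ(1 + α y)` with the stretched exponential `φ(t) = exp (1 - t ^ δ₀)`,
so that `Θ₀' = -(θ₊ - θ₋) α φ'(1 + α y)` and `Θ₀'' = -(θ₊ - θ₋) α² φ''(1 + α y)`. On `t ≥ 1` the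
factors `t ^ (δ₀ - 1)`, `t ^ (δ₀ - 2)` and `φ(t)` all lie in `[0, 1]`, which gives `|φ'(t)| ≤ δ₀`
and `0 ≤ φ''(t) = δ₀ φ(t) (δ₀ t ^ (2δ₀ - 2) + (1 - δ₀) t ^ (δ₀ - 2)) ≤ δ₀`.
Hence `M₀ = |θ₊ - θ₋| + 1` works.
-/

open Real

noncomputable def stretchedExp (δ t : ℝ) : ℝ := exp (1 - t ^ δ)

lemma rpow_mem_Icc_of_one_le_of_nonpos {t p : ℝ} (ht : 1 ≤ t) (hp : p ≤ 0) :
    t ^ p ∈ Set.Icc (0 : ℝ) 1 :=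
  ⟨rpow_nonneg (by linarith) _, rpow_le_one_of_one_le_of_nonpos ht hp⟩

lemma deriv_const_mul_comp_one_add_mul (c α : ℝ) (f : ℝ → ℝ) :
    deriv (fun y => c * f (1 + α * y)) = fun y => c * α * deriv f (1 + α * y) := by
  funext y
  rw [deriv_const_mul_field, deriv_comp_mul_left (f := fun s => f (1 + s)),
    deriv_comp_const_add, smul_eq_mul, mul_assoc]

lemma deriv_const_sub_mul_comp_one_add_mul (a c α : ℝ) (f : ℝ → ℝ) :
    deriv (fun y => a - c * f (1 + α * y)) = fun y => -(c * α) * deriv f (1 + α * y) := by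
  funext y
  rw [deriv_const_sub, deriv_const_mul_comp_one_add_mul, neg_mul]

namespace stretchedExp

variable {δ t : ℝ}

lemma hasDerivAt (ht : t ≠ 0) :
    HasDerivAt (stretchedExp δ) (-(δ * t ^ (δ - 1) * stretchedExp δ t)) t :=
  ((hasDerivAt_rpow_const (Or.inl ht)).const_sub 1).exp.congr_deriv
    (by rw [stretchedExp]; ring)

lemma deriv_eventuallyEq (ht : t ≠ 0) :
    deriv (stretchedExp δ) =ᶠ[nhds t] fun s => -(δ * s ^ (δ - 1) * stretchedExp δ s) := by
  filter_upwards [isOpen_ne.mem_nhds ht] with s hs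
  exact (hasDerivAt hs).deriv

lemma hasDerivAt_deriv (ht : t ≠ 0) :
    HasDerivAt (deriv (stretchedExp δ))
      (δ * stretchedExp δ t * (δ * (t ^ (δ - 1)) ^ 2 + (1 - δ) * t ^ (δ - 2))) t := by
  have hpow := hasDerivAt_rpow_const (p := δ - 1) (Or.inl ht)
  have h := ((hpow.const_mul δ).mul (hasDerivAt (δ := δ) ht)).neg
  refine (h.congr_of_eventuallyEq (deriv_eventuallyEq ht)).congr_deriv ?_
  rw [show δ - 1 - 1 = δ - 2 by ring]
  ring

lemma mem_Icc (hδ : 0 ≤ δ) (ht : 1 ≤ t) : stretchedExp δ t ∈ Set.Icc (0 : ℝ) 1 :=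
  ⟨(exp_pos _).le, exp_le_one_iff.mpr (by linarith [one_le_rpow ht hδ])⟩

lemma abs_deriv_le (hδ₀ : 0 ≤ δ) (hδ₁ : δ ≤ 1) (ht : 1 ≤ t) :
    |deriv (stretchedExp δ) t| ≤ δ := by
  obtain ⟨hp₀, hp₁⟩ := rpow_mem_Icc_of_one_le_of_nonpos ht (by linarith : δ - 1 ≤ 0)
  obtain ⟨he₀, he₁⟩ := mem_Icc hδ₀ ht
  rw [(hasDerivAt (by linarith)).deriv, abs_neg, mul_assoc, abs_of_nonneg (by positivity)]
  exact mul_le_of_le_one_right hδ₀ (mul_le_one₀ hp₁ he₀ he₁)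

lemma abs_deriv_deriv_le (hδ₀ : 0 ≤ δ) (hδ₁ : δ ≤ 1) (ht : 1 ≤ t) :
    |deriv (deriv (stretchedExp δ)) t| ≤ δ := by
  obtain ⟨hp₀, hp₁⟩ := rpow_mem_Icc_of_one_le_of_nonpos ht (by linarith : δ - 1 ≤ 0)
  obtain ⟨hq₀, hq₁⟩ := rpow_mem_Icc_of_one_le_of_nonpos ht (by linarith : δ - 2 ≤ 0)
  obtain ⟨he₀, he₁⟩ := mem_Icc hδ₀ ht
  have hsq : (t ^ (δ - 1)) ^ 2 ≤ 1 := pow_le_one₀ hp₀ hp₁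
  have hconvex : δ * (t ^ (δ - 1)) ^ 2 + (1 - δ) * t ^ (δ - 2) ≤ 1 := by nlinarith
  have hδ' : 0 ≤ 1 - δ := sub_nonneg.mpr hδ₁
  rw [(hasDerivAt_deriv (by linarith)).deriv, mul_assoc, abs_of_nonneg (by positivity)]
  exact mul_le_of_le_one_right hδ₀ (mul_le_one₀ he₁ (by positivity) hconvex)

end stretchedExp

theorem stmt_0_general (θm θp : ℝ) :
    ∃ M₀ > (0:ℝ), ∀ α > (0:ℝ), ∀ δ₀ ∈ Set.Ioo (0:ℝ) 1, ∀ x ≥ (0:ℝ),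
      |deriv (fun y : ℝ => θp - (θp - θm) * Real.exp (1 - (1 + α * y) ^ δ₀)) x|
          ≤ M₀ * α * δ₀ ∧
      |deriv (deriv (fun y : ℝ => θp - (θp - θm) * Real.exp (1 - (1 + α * y) ^ δ₀))) x|
          ≤ M₀ * α ^ 2 * δ₀ := by
  refine ⟨|θp - θm| + 1, by positivity, ?_⟩
  rintro α hα δ₀ ⟨hδ₀, hδ₁⟩ x hx
  have ht : 1 ≤ 1 + α * x := le_add_of_nonneg_right (mul_nonneg hα.le hx)
  have hΘ' : deriv (fun y => θp - (θp - θm) * exp (1 - (1 + α * y) ^ δ₀)) =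
      fun y => -((θp - θm) * α) * deriv (stretchedExp δ₀) (1 + α * y) :=
    deriv_const_sub_mul_comp_one_add_mul θp (θp - θm) α (stretchedExp δ₀)
  have hΘ'' : deriv (deriv (fun y => θp - (θp - θm) * exp (1 - (1 + α * y) ^ δ₀))) =
      fun y => -((θp - θm) * α) * α * deriv (deriv (stretchedExp δ₀)) (1 + α * y) := by
    rw [hΘ', deriv_const_mul_comp_one_add_mul]
  rw [hΘ'', hΘ', abs_mul, abs_mul, abs_mul, abs_neg, abs_mul, abs_of_pos hα]
  constructor
  · gcongr ?_ * _ * ?_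
    · linarith
    · exact stretchedExp.abs_deriv_le hδ₀.le hδ₁.le ht
  · rw [pow_two, ← mul_assoc]
    gcongr ?_ * _ * _ * ?_
    · linarith
    · exact stretchedExp.abs_deriv_deriv_le hδ₀.le hδ₁.le ht

/-- For `Θ₀(x) = θ₊ − (θ₊ − θ₋) exp(1 − (1 + αx)^{δ₀})`, there is a constant
`M₀ > 0` depending only on `θ₋, θ₊` (independent of `α` and `δ₀`) such that for all `α > 0`,
`δ₀ ∈ (0,1)` and `x ≥ 0`, `|Θ₀'(x)| ≤ M₀ α δ₀` and `|Θ₀''(x)| ≤ M₀ α² δ₀`. -/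
theorem stmt_0 (θm θp : ℝ) (hθm : 0 < θm) (hθp : 0 < θp) :
    ∃ M₀ > (0:ℝ), ∀ α > (0:ℝ), ∀ δ₀ ∈ Set.Ioo (0:ℝ) 1, ∀ x ≥ (0:ℝ),
      |deriv (fun y : ℝ => θp - (θp - θm) * Real.exp (1 - (1 + α * y) ^ δ₀)) x|
          ≤ M₀ * α * δ₀ ∧
      |deriv (deriv (fun y : ℝ => θp - (θp - θm) * Real.exp (1 - (1 + α * y) ^ δ₀))) x|
          ≤ M₀ * α ^ 2 * δ₀ :=
  stmt_0_general θm θp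
end

section
/- There exists a constant M₀ > 0, depending only on θ₋ and θ₊ (in particular independent of α and δ₀), such that for every α > 0 and δ₀ ∈ (0,1): ∫₀^∞ Θ₀'(x)² dx ≤ M₀ α δ₀, ∫₀^∞ |Θ₀'(x)| dx = |θ₊ − θ₋| ≤ M₀, and ∫₀^∞ Θ₀'(x)² (1 + αx) dx ≤ M₀ α δ₀. -/
/-!
Up to the factor `θ₊ − θ₋`, `Θ₀'` is the density `w(x) = αδ₀ (1+αx)^{δ₀-1} e^{1-(1+αx)^{δ₀}}`
of the distribution function `1 - e^{1-(1+αx)^{δ₀}}` on `(0, ∞)`, so `∫ w = 1`. With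
`u = (1+αx)^{δ₀} ≥ 1` one has `w(x)(1+αx) = αδ₀ · u e^{1-u} ≤ αδ₀`, because `u ≤ e^{u-1}`.
Hence both `Θ₀'²` and `Θ₀'²(1+αx)` are at most `(θ₊ − θ₋)² αδ₀ · w`, and integrating gives
the bounds.
-/

open MeasureTheory Real Set Filter Topology

noncomputable def stretchedExpDensity (α δ x : ℝ) : ℝ :=
  α * δ * (1 + α * x) ^ (δ - 1) * exp (1 - (1 + α * x) ^ δ)

section StretchedExpDensity

variable {α δ x : ℝ}

lemma hasDerivAt_exp_one_sub_rpow (hx : 0 < 1 + α * x) :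
    HasDerivAt (fun y => exp (1 - (1 + α * y) ^ δ)) (-stretchedExpDensity α δ x) x := by
  have hlin : HasDerivAt (fun y => 1 + α * y) α x := by
    simpa using ((hasDerivAt_id x).const_mul α).const_add 1
  have hpow := (hasDerivAt_rpow_const (p := δ) (Or.inl hx.ne')).comp x hlin
  refine (hpow.const_sub 1).exp.congr_deriv ?_
  simp only [stretchedExpDensity, Function.comp_def]
  ring

lemma stretchedExpDensity_nonneg (hα : 0 ≤ α) (hδ : 0 ≤ δ) (hx : 0 ≤ x) :
    0 ≤ stretchedExpDensity α δ x := by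
  unfold stretchedExpDensity
  positivity

lemma mul_exp_one_sub_le_one (u : ℝ) : u * exp (1 - u) ≤ 1 := by
  have h := mul_le_mul_of_nonneg_right (add_one_le_exp (u - 1)) (exp_pos (1 - u)).le
  rwa [sub_add_cancel, ← exp_add, sub_add_sub_cancel, sub_self, exp_zero] at h

lemma stretchedExpDensity_mul_le (hα : 0 ≤ α) (hδ : 0 ≤ δ) (hx : 0 < 1 + α * x) :
    stretchedExpDensity α δ x * (1 + α * x) ≤ α * δ := by
  have hpow : (1 + α * x) ^ (δ - 1) * (1 + α * x) = (1 + α * x) ^ δ := by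
    rw [← rpow_add_one hx.ne', sub_add_cancel]
  calc stretchedExpDensity α δ x * (1 + α * x)
      = α * δ * ((1 + α * x) ^ δ * exp (1 - (1 + α * x) ^ δ)) := by
        rw [stretchedExpDensity, ← hpow]
        ring
    _ ≤ α * δ * 1 := by gcongr; exact mul_exp_one_sub_le_one _
    _ = α * δ := mul_one _

lemma stretchedExpDensity_le (hα : 0 ≤ α) (hδ : 0 ≤ δ) (hx : 0 ≤ x) :
    stretchedExpDensity α δ x ≤ α * δ := by
  have hone : 1 ≤ 1 + α * x := by nlinarith
  calc stretchedExpDensity α δ x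
      ≤ stretchedExpDensity α δ x * (1 + α * x) :=
        le_mul_of_one_le_right (stretchedExpDensity_nonneg hα hδ hx) hone
    _ ≤ α * δ := stretchedExpDensity_mul_le hα hδ (by linarith)

lemma tendsto_exp_one_sub_rpow_atTop (hα : 0 < α) (hδ : 0 < δ) :
    Tendsto (fun y => exp (1 - (1 + α * y) ^ δ)) atTop (𝓝 0) := by
  have hlin : Tendsto (fun y => 1 + α * y) atTop atTop :=
    tendsto_atTop_add_const_left _ 1 (tendsto_id.const_mul_atTop hα)
  have hpow := (tendsto_rpow_atTop hδ).comp hlin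
  exact tendsto_exp_atBot.comp
    (tendsto_atBot_add_const_left _ 1 (tendsto_neg_atTop_atBot.comp hpow))

lemma hasDerivAt_exp_one_sub_rpow_of_mem_Ici (hα : 0 ≤ α) :
    ∀ x ∈ Ici (0 : ℝ),
      HasDerivAt (fun y => -exp (1 - (1 + α * y) ^ δ)) (stretchedExpDensity α δ x) x :=
  fun x hx => by
    have hx : 0 < 1 + α * x := by nlinarith [mem_Ici.mp hx]
    simpa only [neg_neg] using (hasDerivAt_exp_one_sub_rpow (δ := δ) hx).fun_neg

lemma integrableOn_stretchedExpDensity (hα : 0 < α) (hδ : 0 < δ) :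
    IntegrableOn (stretchedExpDensity α δ) (Ioi 0) :=
  integrableOn_Ioi_deriv_of_nonneg' (hasDerivAt_exp_one_sub_rpow_of_mem_Ici hα.le)
    (fun _ hx => stretchedExpDensity_nonneg hα.le hδ.le hx.le)
    (tendsto_exp_one_sub_rpow_atTop hα hδ).neg

lemma integral_stretchedExpDensity (hα : 0 < α) (hδ : 0 < δ) :
    ∫ x in Ioi 0, stretchedExpDensity α δ x = 1 := by
  rw [integral_Ioi_of_hasDerivAt_of_nonneg' (hasDerivAt_exp_one_sub_rpow_of_mem_Ici hα.le)
    (fun _ hx => stretchedExpDensity_nonneg hα.le hδ.le hx.le)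
    (tendsto_exp_one_sub_rpow_atTop hα hδ).neg]
  simp

lemma setIntegral_le_of_le_mul_stretchedExpDensity (hα : 0 < α) (hδ : 0 < δ) {f : ℝ → ℝ}
    {K : ℝ} (hf₀ : ∀ x ∈ Ioi 0, 0 ≤ f x) (hf : ∀ x ∈ Ioi 0, f x ≤ K * stretchedExpDensity α δ x) :
    ∫ x in Ioi 0, f x ≤ K := by
  calc ∫ x in Ioi 0, f x
      ≤ ∫ x in Ioi 0, K * stretchedExpDensity α δ x :=
        setIntegral_mono_of_nonneg hf₀ hf ((integrableOn_stretchedExpDensity hα hδ).const_mul K)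
    _ = K := by rw [integral_const_mul, integral_stretchedExpDensity hα hδ, mul_one]

lemma deriv_exp_one_sub_rpow_profile (θm θp : ℝ) (hα : 0 ≤ α) (hx : 0 ≤ x) :
    deriv (fun y => θp - (θp - θm) * exp (1 - (1 + α * y) ^ δ)) x
      = (θp - θm) * stretchedExpDensity α δ x := by
  have hpos : 0 < 1 + α * x := by positivity
  have h := ((hasDerivAt_exp_one_sub_rpow (δ := δ) hpos).const_mul (θp - θm)).const_sub θp
  exact (h.congr_deriv (by ring)).deriv

lemma sq_mul_stretchedExpDensity_le (c : ℝ) (hα : 0 ≤ α) (hδ : 0 ≤ δ) (hx : 0 ≤ x) :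
    (c * stretchedExpDensity α δ x) ^ 2 ≤ c ^ 2 * (α * δ) * stretchedExpDensity α δ x :=
  calc (c * stretchedExpDensity α δ x) ^ 2
      = c ^ 2 * stretchedExpDensity α δ x * stretchedExpDensity α δ x := by ring
    _ ≤ c ^ 2 * (α * δ) * stretchedExpDensity α δ x := by
      gcongr
      exacts [stretchedExpDensity_nonneg hα hδ hx, stretchedExpDensity_le hα hδ hx]

lemma sq_mul_stretchedExpDensity_mul_le (c : ℝ) (hα : 0 ≤ α) (hδ : 0 ≤ δ) (hx : 0 ≤ x) :
    (c * stretchedExpDensity α δ x) ^ 2 * (1 + α * x)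
      ≤ c ^ 2 * (α * δ) * stretchedExpDensity α δ x :=
  calc (c * stretchedExpDensity α δ x) ^ 2 * (1 + α * x)
      = c ^ 2 * (stretchedExpDensity α δ x * (1 + α * x)) * stretchedExpDensity α δ x := by ring
    _ ≤ c ^ 2 * (α * δ) * stretchedExpDensity α δ x := by
      gcongr c ^ 2 * ?_ * _
      exacts [stretchedExpDensity_nonneg hα hδ hx,
        stretchedExpDensity_mul_le hα hδ (by positivity)]

end StretchedExpDensity

theorem stmt_1_general (θm θp : ℝ) :
    ∃ M₀ > (0:ℝ), ∀ α > (0:ℝ), ∀ δ₀ ∈ Set.Ioo (0:ℝ) 1,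
      (∫ x in Set.Ioi (0:ℝ),
          (deriv (fun y : ℝ => θp - (θp - θm) * Real.exp (1 - (1 + α * y) ^ δ₀)) x) ^ 2)
        ≤ M₀ * α * δ₀ ∧
      (∫ x in Set.Ioi (0:ℝ),
          |deriv (fun y : ℝ => θp - (θp - θm) * Real.exp (1 - (1 + α * y) ^ δ₀)) x|)
        = |θp - θm| ∧
      |θp - θm| ≤ M₀ ∧
      (∫ x in Set.Ioi (0:ℝ),
          (deriv (fun y : ℝ => θp - (θp - θm) * Real.exp (1 - (1 + α * y) ^ δ₀)) x) ^ 2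
            * (1 + α * x))
        ≤ M₀ * α * δ₀ := by
  set c := θp - θm
  refine ⟨(|c| + 1) ^ 2, by positivity, fun α hα δ₀ ⟨hδ₀, _⟩ => ?_⟩
  set w := stretchedExpDensity α δ₀
  have hderiv : ∀ x ∈ Ioi (0 : ℝ),
      deriv (fun y => θp - c * exp (1 - (1 + α * y) ^ δ₀)) x = c * w x :=
    fun x hx => deriv_exp_one_sub_rpow_profile θm θp hα.le hx.le
  have hM : c ^ 2 * (α * δ₀) ≤ (|c| + 1) ^ 2 * α * δ₀ := by
    rw [← sq_abs c, mul_assoc]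
    gcongr
    linarith
  refine ⟨?_, ?_, by nlinarith [abs_nonneg c], ?_⟩
  · rw [setIntegral_congr_fun measurableSet_Ioi fun x hx => congrArg (· ^ 2) (hderiv x hx)]
    exact (setIntegral_le_of_le_mul_stretchedExpDensity hα hδ₀ (fun _ _ => sq_nonneg _)
      fun x hx => sq_mul_stretchedExpDensity_le c hα.le hδ₀.le hx.le).trans hM
  · rw [setIntegral_congr_fun measurableSet_Ioi fun x hx => by
        rw [hderiv x hx, abs_mul, abs_of_nonneg (stretchedExpDensity_nonneg hα.le hδ₀.le hx.le)],
      integral_const_mul, integral_stretchedExpDensity hα hδ₀, mul_one]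
  · rw [setIntegral_congr_fun measurableSet_Ioi fun x hx =>
      congrArg (· ^ 2 * (1 + α * x)) (hderiv x hx)]
    refine (setIntegral_le_of_le_mul_stretchedExpDensity hα hδ₀ (fun x hx => ?_)
      fun x hx => sq_mul_stretchedExpDensity_mul_le c hα.le hδ₀.le hx.le).trans hM
    have : 0 < x := hx
    positivity

/-- integral bounds on `Θ₀' ` for
`Θ₀(x) = θ₊ − (θ₊ − θ₋) exp(1 − (1 + αx)^{δ₀})`, with a constant `M₀` depending only on
`θ₋, θ₊` (independent of `α` and `δ₀`). -/
theorem stmt_1 (θm θp : ℝ) (hθm : 0 < θm) (hθp : 0 < θp) :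
    ∃ M₀ > (0:ℝ), ∀ α > (0:ℝ), ∀ δ₀ ∈ Set.Ioo (0:ℝ) 1,
      (∫ x in Set.Ioi (0:ℝ),
          (deriv (fun y : ℝ => θp - (θp - θm) * Real.exp (1 - (1 + α * y) ^ δ₀)) x) ^ 2)
        ≤ M₀ * α * δ₀ ∧
      (∫ x in Set.Ioi (0:ℝ),
          |deriv (fun y : ℝ => θp - (θp - θm) * Real.exp (1 - (1 + α * y) ^ δ₀)) x|)
        = |θp - θm| ∧
      |θp - θm| ≤ M₀ ∧
      (∫ x in Set.Ioi (0:ℝ),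
          (deriv (fun y : ℝ => θp - (θp - θm) * Real.exp (1 - (1 + α * y) ^ δ₀)) x) ^ 2
            * (1 + α * x))
        ≤ M₀ * α * δ₀ :=
  stmt_1_general θm θp
end
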